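/- Let P_1,…,P_N be orthogonal projections onto subspaces of EuclideanSpace ℝ (Fin n) and let p_1,…,p_N ∈ [1,∞) satisfy Σ_{j=1}^N (1/p_j) P_j ≤ I in the Loewner order. Then for every a with ‖a‖ < 1: Σ_{j=1}^N (1/p_j) · ‖P_j a‖ · arctanh(‖P_j a‖) ≤ ‖a‖ · arctanh(‖a‖). -/

import Mathlib

/-- The inverse hyperbolic tangent, `arctanh x = (1/2) log ((1+x)/(1-x))`. -/
noncomputable def arctanh (x : ℝ) : ℝ := (1 / 2) * Real.log ((1 + x) / (1 - x))

/-!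
Write `g t = t * arctanh t`. The series `arctanh t = ∑ t ^ (2k+1) / (2k+1)` shows that
`g t / t ^ 2 = ∑ t ^ (2k) / (2k+1)` is increasing on `[0, 1)`, so with `s = ‖a‖ ≥ ‖P_j a‖ = t_j`
each term obeys `s² g(t_j) ≤ t_j² g(s)`. Weighting by `1/p_j` and summing, the Loewner
inequality at `a` bounds `∑ (1/p_j) t_j²` by `s²`.
-/

open Finset

theorem hasSum_arctanh {x : ℝ} (hx : |x| < 1) :
    HasSum (fun k : ℕ => x ^ (2 * k + 1) / (2 * k + 1)) (arctanh x) := by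
  have hx' := abs_lt.mp hx
  have hterm : (fun k : ℕ => (1 / 2 : ℝ) * (2 * (1 / (2 * k + 1)) * x ^ (2 * k + 1))) =
      fun k : ℕ => x ^ (2 * k + 1) / (2 * k + 1) := by
    funext k; ring
  rw [arctanh, Real.log_div (by linarith) (by linarith), ← hterm]
  exact (Real.hasSum_log_sub_log_of_abs_lt_one hx).mul_left (1 / 2)

theorem mul_arctanh_nonneg {x : ℝ} (hx₀ : 0 ≤ x) (hx₁ : x < 1) : 0 ≤ x * arctanh x :=
  mul_nonneg hx₀ <| (hasSum_arctanh (abs_lt.mpr ⟨by linarith, hx₁⟩)).nonneg fun _ => by positivity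

theorem sq_mul_mul_arctanh_le {t s : ℝ} (ht : 0 ≤ t) (hts : t ≤ s) (hs : s < 1) :
    s ^ 2 * (t * arctanh t) ≤ t ^ 2 * (s * arctanh s) := by
  have habs : ∀ {x : ℝ}, 0 ≤ x → x < 1 → |x| < 1 := fun h₀ h₁ => abs_lt.mpr ⟨by linarith, h₁⟩
  refine hasSum_le (fun k => ?_)
    (((hasSum_arctanh (habs ht (hts.trans_lt hs))).mul_left t).mul_left (s ^ 2))
    (((hasSum_arctanh (habs (ht.trans hts) hs)).mul_left s).mul_left (t ^ 2))
  have hpow : t ^ (2 * k) ≤ s ^ (2 * k) := pow_le_pow_left₀ ht hts _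
  calc s ^ 2 * (t * (t ^ (2 * k + 1) / (2 * k + 1)))
      = s ^ 2 * t ^ 2 * t ^ (2 * k) / (2 * k + 1) := by ring
    _ ≤ s ^ 2 * t ^ 2 * s ^ (2 * k) / (2 * k + 1) := by gcongr
    _ = t ^ 2 * (s * (s ^ (2 * k + 1) / (2 * k + 1))) := by ring

theorem sum_mul_mul_arctanh_le {ι : Type*} (u : Finset ι) (w t : ι → ℝ) {s : ℝ}
    (hw : ∀ i ∈ u, 0 ≤ w i) (ht : ∀ i ∈ u, 0 ≤ t i) (hts : ∀ i ∈ u, t i ≤ s)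
    (hs₀ : 0 ≤ s) (hs₁ : s < 1) (hsq : ∑ i ∈ u, w i * t i ^ 2 ≤ s ^ 2) :
    ∑ i ∈ u, w i * (t i * arctanh (t i)) ≤ s * arctanh s := by
  obtain rfl | hs_pos := hs₀.eq_or_lt
  · have ht0 : ∀ i ∈ u, t i = 0 := fun i hi => le_antisymm (hts i hi) (ht i hi)
    simp +contextual [sum_eq_zero, ht0]
  refine le_of_mul_le_mul_left ?_ (pow_pos hs_pos 2)
  calc s ^ 2 * ∑ i ∈ u, w i * (t i * arctanh (t i))
      = ∑ i ∈ u, w i * (s ^ 2 * (t i * arctanh (t i))) := by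
        rw [mul_sum]; exact sum_congr rfl fun _ _ => by ring
    _ ≤ ∑ i ∈ u, w i * (t i ^ 2 * (s * arctanh s)) :=
        sum_le_sum fun i hi =>
          mul_le_mul_of_nonneg_left (sq_mul_mul_arctanh_le (ht i hi) (hts i hi) hs₁) (hw i hi)
    _ = (∑ i ∈ u, w i * t i ^ 2) * (s * arctanh s) := by
        rw [sum_mul]; exact sum_congr rfl fun _ _ => by ring
    _ ≤ s ^ 2 * (s * arctanh s) :=
        mul_le_mul_of_nonneg_right hsq (mul_arctanh_nonneg hs₀ hs₁)

/-- If the orthogonal projections `P_j` onto the subspaces `V_j` satisfy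
`Σ_j (1/p_j) P_j ≤ I` in the Loewner order, then for every `a` with `‖a‖ < 1`,
`Σ_j (1/p_j) ‖P_j a‖ arctanh(‖P_j a‖) ≤ ‖a‖ arctanh(‖a‖)`. -/
theorem arctanh_subadditivity {n N : ℕ}
    (V : Fin N → Submodule ℝ (EuclideanSpace ℝ (Fin n)))
    (p : Fin N → ℝ) (hp : ∀ j, 1 ≤ p j)
    (hLoewner : ∀ x : EuclideanSpace ℝ (Fin n),
      ∑ j, (1 / p j) * ‖(Submodule.orthogonalProjectionOnto (V j) x : EuclideanSpace ℝ (Fin n))‖ ^ 2 ≤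
        ‖x‖ ^ 2)
    (a : EuclideanSpace ℝ (Fin n)) (ha : ‖a‖ < 1) :
    ∑ j, (1 / p j) * (‖(Submodule.orthogonalProjectionOnto (V j) a : EuclideanSpace ℝ (Fin n))‖ *
        arctanh ‖(Submodule.orthogonalProjectionOnto (V j) a : EuclideanSpace ℝ (Fin n))‖) ≤
      ‖a‖ * arctanh ‖a‖ :=
  sum_mul_mul_arctanh_le _ _ _
    (fun j _ => one_div_nonneg.mpr (zero_le_one.trans (hp j)))
    (fun _ _ => norm_nonneg _)
    (fun j _ => (V j).norm_orthogonalProjectionOnto_apply_le a)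
    (norm_nonneg a) ha (hLoewner a)
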